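/- arXiv:math/9808011 — 2 statements merged into one kernel-verified Lean document; each statement's English description precedes it below -/
import Mathlib

section
/- Let ξ and θ be ordinals with ξ ≠ 0. Then there exists a family of functions code_λ, one for each ordinal λ ≤ θ, where code_λ maps functions f : {α | α < λ} → {β | β < ξ} to functions {γ | γ < ξ·λ} → Bool, such that (1) each code_λ is injective, and (2) the family commutes with restriction: for all λ ≤ λ' ≤ θ and every f : {α | α < λ'} → {β | β < ξ}, the restriction of code_{λ'}(f) to {γ | γ < ξ·λ} equals code_λ applied to the restriction of f to {α | α < λ}. -/
/-- For ordinals `ξ ≠ 0` and `θ`, there is a family of injective coding maps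
`code l`, for `l ≤ θ`, sending a `l`-sequence of ordinals below `ξ` to a binary
sequence of ordinal length `ξ * l`, commuting with restriction to initial
segments. -/
theorem coding_sequences_by_binary (ξ θ : Ordinal) (hξ : ξ ≠ 0) :
    ∃ code : ∀ l : Ordinal, l ≤ θ →
        (({α : Ordinal // α < l} → {β : Ordinal // β < ξ}) →
          ({γ : Ordinal // γ < ξ * l} → Bool)),
      (∀ (l : Ordinal) (hl : l ≤ θ), Function.Injective (code l hl)) ∧
      (∀ (l l' : Ordinal) (hll' : l ≤ l') (hl' : l' ≤ θ)
          (f : {α : Ordinal // α < l'} → {β : Ordinal // β < ξ})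
          (γ : {γ : Ordinal // γ < ξ * l}),
        code l' hl' f ⟨γ.1, lt_of_lt_of_le γ.2 (mul_le_mul_right hll' ξ)⟩ =
          code l (le_trans hll' hl') (fun α => f ⟨α.1, lt_of_lt_of_le α.2 hll'⟩) γ) := by
  refine ⟨fun l hl f γ =>
    decide ((f ⟨γ.1 / ξ, (Ordinal.div_lt hξ).2 γ.2⟩).1 = γ.1 % ξ), ?_, ?_⟩
  · intro l hl f g hfg
    funext α
    have hγ : ξ * α.1 + (f α).1 < ξ * l := by
      calc ξ * α.1 + (f α).1 < ξ * α.1 + ξ := by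
            exact add_lt_add_right (f α).2 _
        _ = ξ * (α.1 + 1) := by rw [mul_add_one]
        _ ≤ ξ * l := mul_le_mul_right (Order.add_one_le_of_lt α.2) ξ
    have h := congrFun hfg ⟨ξ * α.1 + (f α).1, hγ⟩
    simp only [decide_eq_decide] at h
    have hdiv : (ξ * α.1 + (f α).1) / ξ = α.1 := by
      rw [Ordinal.mul_add_div _ hξ, Ordinal.div_eq_zero_of_lt (f α).2, add_zero]
    have hmod : (ξ * α.1 + (f α).1) % ξ = (f α).1 := by rw [Ordinal.mul_add_mod_self, Ordinal.mod_eq_of_lt (f α).2]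
    simp only [hdiv, hmod, Subtype.coe_eta] at h
    exact Subtype.ext (h.1 trivial).symm
  · intro l l' hll' hl' f γ
    simp only [decide_eq_decide]
end

section
/- Let γ be an ordinal. Say that a binary string of ordinal length λ is a function t : {α | α < λ} → Bool, and say that s (of length λ) is an initial segment of t (of length λ') when λ ≤ λ' and t restricted to {α | α < λ} equals s. Suppose that to every binary string t of length λ < γ there is assigned a binary string b_t (of some ordinal length), such that: (monotonicity) whenever s is an initial segment of t, b_s is an initial segment of b_t; and (splitting) for every string t of length λ with λ + 1 ≤ γ, the two one-point extensions t⌢0 and t⌢1 of t satisfy that b_{t⌢0} and b_{t⌢1} are incomparable, i.e. neither is an initial segment of the other. Let h : {α | α < γ} → Bool, and let b be a binary string such that for every λ < γ, b_{h↾λ} is an initial segment of b, where h↾λ denotes the restriction of h to {α | α < λ}. Then for every binary string t of length less than γ: t is an initial segment of h if and only if b_t is an initial segment of b. -/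
/-- A binary string of ordinal length: a function from a proper initial segment
of the ordinals to `Bool`. -/
structure BinStr where
  len : Ordinal.{0}
  val : {α : Ordinal // α < len} → Bool

/-- `s` is an initial segment of `t`: the length of `s` is at most that of `t`,
and `t` restricted to the domain of `s` equals `s`. -/
def BinStr.IsInitSeg (s t : BinStr) : Prop :=
  ∃ h : s.len ≤ t.len, ∀ α : {α : Ordinal // α < s.len},
    t.val ⟨α.1, lt_of_lt_of_le α.2 h⟩ = s.val α

/-- The one-point extension `t⌢i` of the binary string `t` by the bit `i`. -/
noncomputable def BinStr.extend (t : BinStr) (i : Bool) : BinStr where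
  len := t.len + 1
  val := fun α => if h : α.1 < t.len then t.val ⟨α.1, h⟩ else i

/-- The restriction `t↾l` of the binary string `t` to length `l ≤ t.len`. -/
def BinStr.restrict (t : BinStr) (l : Ordinal) (hl : l ≤ t.len) : BinStr where
  len := l
  val := fun α => t.val ⟨α.1, lt_of_lt_of_le α.2 hl⟩

lemma BinStr.ext' {s t : BinStr} (hl : s.len = t.len)
    (hv : ∀ α (h1 : α < s.len) (h2 : α < t.len), s.val ⟨α, h1⟩ = t.val ⟨α, h2⟩) : s = t := by
  cases s with | mk ls vs =>
  cases t with | mk lt vt =>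
  dsimp at hl
  subst hl
  simp only [mk.injEq, heq_eq_eq, true_and]
  funext α
  exact hv α.1 α.2 α.2

lemma BinStr.IsInitSeg.trans {s t u : BinStr} (h1 : s.IsInitSeg t) (h2 : t.IsInitSeg u) :
    s.IsInitSeg u := by
  obtain ⟨l1, v1⟩ := h1
  obtain ⟨l2, v2⟩ := h2
  exact ⟨l1.trans l2, fun α => (v2 ⟨α.1, lt_of_lt_of_le α.2 l1⟩).trans (v1 α)⟩

lemma BinStr.comparable {s t B : BinStr} (hs : s.IsInitSeg B) (ht : t.IsInitSeg B)
    (hl : s.len ≤ t.len) : s.IsInitSeg t := by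
  obtain ⟨l1, v1⟩ := hs
  obtain ⟨l2, v2⟩ := ht
  exact ⟨hl, fun α => (v2 ⟨α.1, lt_of_lt_of_le α.2 hl⟩).symm.trans (v1 α)⟩

/-- Suppose every binary string `t` of length `< γ` is assigned a binary string
`b t`, monotonically with respect to the initial-segment relation, and such that
the strings assigned to the two one-point extensions of any `t` with
`t.len + 1 ≤ γ` are incomparable.  If `h` is a binary string of length `γ` and
`b (h↾l)` is an initial segment of `B` for every `l < γ`, then a binary string
`t` of length `< γ` is an initial segment of `h` if and only if `b t` is an
initial segment of `B`. -/
theorem branch_recovery (γ : Ordinal) (b : BinStr → BinStr)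
    (mono : ∀ s t : BinStr, t.len < γ → s.IsInitSeg t → (b s).IsInitSeg (b t))
    (split : ∀ t : BinStr, t.len + 1 ≤ γ →
        ¬ (b (t.extend false)).IsInitSeg (b (t.extend true)) ∧
        ¬ (b (t.extend true)).IsInitSeg (b (t.extend false)))
    (h : {α : Ordinal // α < γ} → Bool) (B : BinStr)
    (hB : ∀ (l : Ordinal) (hl : l < γ),
      (b (BinStr.restrict ⟨γ, h⟩ l hl.le)).IsInitSeg B) :
    ∀ t : BinStr, t.len < γ → (t.IsInitSeg ⟨γ, h⟩ ↔ (b t).IsInitSeg B) := by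
  intro t ht
  constructor
  · rintro ⟨hle, hval⟩
    have heq : t = BinStr.restrict ⟨γ, h⟩ t.len ht.le := by
      refine BinStr.ext' rfl ?_
      intro α h1 h2
      exact (hval ⟨α, h1⟩).symm
    rw [heq]
    exact hB t.len ht
  · intro hbt
    by_contra hnot
    -- there is a point of disagreement
    have hne : ∃ α, ∃ hα : α < t.len,
        h ⟨α, lt_of_lt_of_le hα ht.le⟩ ≠ t.val ⟨α, hα⟩ := by
      by_contra hc
      push_neg at hc
      exact hnot ⟨ht.le, fun α => hc α.1 α.2⟩
    set S : Set Ordinal := {α | ∃ hα : α < t.len,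
        h ⟨α, lt_of_lt_of_le hα ht.le⟩ ≠ t.val ⟨α, hα⟩} with hS
    have hSne : S.Nonempty := hne
    set lam := Ordinal.lt_wf.min S hSne with hlamdef
    obtain ⟨hlam, hbit⟩ : lam ∈ S := Ordinal.lt_wf.min_mem S hSne
    have hmin : ∀ α (hα : α < t.len), α < lam →
        h ⟨α, lt_of_lt_of_le hα ht.le⟩ = t.val ⟨α, hα⟩ := by
      intro α hα hαlam
      by_contra hc
      exact Ordinal.lt_wf.not_lt_min S ⟨hα, hc⟩ hαlam
    have hsucc : lam + 1 ≤ t.len := by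
      rw [Ordinal.add_one_eq_succ]
      exact Order.succ_le_of_lt hlam
    have hsuccγ : lam + 1 < γ := lt_of_le_of_lt hsucc ht
    have hlamγ : lam < γ := lt_of_lt_of_le hlam ht.le
    set s : BinStr := BinStr.restrict ⟨γ, h⟩ lam hlamγ.le with hsdef
    have hslen : s.len = lam := rfl
    -- extension by the bit of t is an initial segment of t
    have het : (s.extend (t.val ⟨lam, hlam⟩)).IsInitSeg t := by
      refine ⟨hsucc, fun α => ?_⟩
      have hα1 : α.1 < lam + 1 := α.2
      show t.val _ = if h' : α.1 < lam then _ else _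
      by_cases hc : α.1 < lam
      · rw [dif_pos hc]
        exact (hmin α.1 _ hc).symm
      · rw [dif_neg hc]
        have : α.1 = lam := by
          rcases lt_or_eq_of_le (Order.lt_succ_iff.mp (by rwa [← Ordinal.add_one_eq_succ])) with h' | h'
          · exact absurd h' hc
          · exact h'
        congr 1
        exact Subtype.ext this
    -- extension by the bit of h is a restriction of h
    have heh : s.extend (h ⟨lam, hlamγ⟩) = BinStr.restrict ⟨γ, h⟩ (lam + 1) hsuccγ.le := by
      refine BinStr.ext' rfl ?_
      intro α h1 h2
      show (if h' : α < lam then _ else _) = h _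
      by_cases hc : α < lam
      · rw [dif_pos hc]; rfl
      · rw [dif_neg hc]
        have : α = lam := by
          rcases lt_or_eq_of_le (Order.lt_succ_iff.mp (by rwa [← Ordinal.add_one_eq_succ])) with h' | h'
          · exact absurd h' hc
          · exact h'
        subst this
        rfl
    have h1 : (b (s.extend (t.val ⟨lam, hlam⟩))).IsInitSeg B :=
      (mono _ t ht het).trans hbt
    have h2 : (b (s.extend (h ⟨lam, hlamγ⟩))).IsInitSeg B := by
      rw [heh]; exact hB (lam + 1) hsuccγ
    have hsplit := split s (by rw [hslen]; exact hsuccγ.le)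
    have hdiff : h ⟨lam, hlamγ⟩ ≠ t.val ⟨lam, hlam⟩ := hbit
    rcases le_total (b (s.extend (t.val ⟨lam, hlam⟩))).len (b (s.extend (h ⟨lam, hlamγ⟩))).len with hle | hle
    · have hcomp := BinStr.comparable h1 h2 hle
      cases hbt' : t.val ⟨lam, hlam⟩ <;> cases hbh : h ⟨lam, hlamγ⟩ <;>
        rw [hbt', hbh] at hcomp hdiff <;> first
          | exact hdiff rfl
          | exact hsplit.1 hcomp
          | exact hsplit.2 hcomp
    · have hcomp := BinStr.comparable h2 h1 hle
      cases hbt' : t.val ⟨lam, hlam⟩ <;> cases hbh : h ⟨lam, hlamγ⟩ <;>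
        rw [hbt', hbh] at hcomp hdiff <;> first
          | exact hdiff rfl
          | exact hsplit.1 hcomp
          | exact hsplit.2 hcomp
end
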